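/- For a transversely isotropic constant elasticity tensor with parameters (a,b,c,d,e), the displacement field u⁽⁸⁾(x) = (0, 0, dx² − ez²) is a solution of the elasticity system ∇·(c ε(u⁽⁸⁾)) = 0 on ℝ³. -/

import Mathlib

open scoped Matrix

/-- Partial derivative `∂ᵢ g` of a scalar function on ℝ³. -/
noncomputable def pd (i : Fin 3) (g : (Fin 3 → ℝ) → ℝ) (x : Fin 3 → ℝ) : ℝ :=
  fderiv ℝ g x (Pi.single i 1)

/-- Strain tensor `ε(u)_{ij} = (1/2)(∂ᵢ u_j + ∂_j u_i)`. -/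
noncomputable def strain (u : (Fin 3 → ℝ) → Fin 3 → ℝ) (x : Fin 3 → ℝ)
    (i j : Fin 3) : ℝ :=
  (pd i (fun y => u y j) x + pd j (fun y => u y i) x) / 2

/-- Voigt vector `(ε₁₁, ε₂₂, ε₃₃, 2ε₂₃, 2ε₃₁, 2ε₁₂)`. -/
noncomputable def voigtVec (e : Fin 3 → Fin 3 → ℝ) : Fin 6 → ℝ :=
  ![e 0 0, e 1 1, e 2 2, 2 * e 1 2, 2 * e 2 0, 2 * e 0 1]

/-- The 3×6 Voigt divergence operator. -/
noncomputable def voigtDiv (F : (Fin 3 → ℝ) → Fin 6 → ℝ) (x : Fin 3 → ℝ) : Fin 3 → ℝ :=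
  ![pd 0 (fun y => F y 0) x + pd 2 (fun y => F y 4) x + pd 1 (fun y => F y 5) x,
    pd 1 (fun y => F y 1) x + pd 2 (fun y => F y 3) x + pd 0 (fun y => F y 5) x,
    pd 2 (fun y => F y 2) x + pd 1 (fun y => F y 3) x + pd 0 (fun y => F y 4) x]

/-- The transversely isotropic Voigt matrix with parameters `(a,b,c,d,e)`. -/
noncomputable def TImat (a b c d e : ℝ) : Matrix (Fin 6) (Fin 6) ℝ :=
  !![a, b, c, 0, 0, 0;
     b, a, c, 0, 0, 0;
     c, c, d, 0, 0, 0;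
     0, 0, 0, e, 0, 0;
     0, 0, 0, 0, e, 0;
     0, 0, 0, 0, 0, (a - b) / 2]

/-- The displacement field `u⁽⁸⁾(x) = (0, 0, dx² − ez²)`. -/
noncomputable def uEight (d e : ℝ) (x : Fin 3 → ℝ) : Fin 3 → ℝ :=
  ![0, 0, d * x 0 ^ 2 - e * x 2 ^ 2]

/-! The strain of `u⁽⁸⁾` has only the entries `ε₁₃ = ε₃₁ = d x₁` and `ε₃₃ = -2e x₃`, so the
stress is linear in `x`, with `σ₁₁ = σ₂₂ = -2ce x₃`, `σ₃₃ = -2de x₃`, `σ₁₃ = 2de x₁` and all other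
entries zero. The first two equations only differentiate `σ₁₁`, `σ₂₂` in directions they do not
depend on, and in the third `∂₃σ₃₃ + ∂₁σ₁₃ = -2de + 2de = 0`. Indices here are 1-based; in the
code `x₁, x₂, x₃` are `x 0, x 1, x 2`. -/

variable {x : Fin 3 → ℝ}

lemma pd_const (i : Fin 3) (k : ℝ) : pd i (fun _ => k) x = 0 := by
  simp [pd]

lemma pd_const_mul_coord (i j : Fin 3) (k : ℝ) :
    pd i (fun y => k * y j) x = k * (Pi.single i 1 : Fin 3 → ℝ) j := by
  simp [pd, ((hasFDerivAt_apply (𝕜 := ℝ) (F' := fun _ => ℝ) j x).const_mul k).fderiv]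

lemma pd_const_mul_coord_sq (i j : Fin 3) (k : ℝ) :
    pd i (fun y => k * y j ^ 2) x = k * (2 * x j * (Pi.single i 1 : Fin 3 → ℝ) j) := by
  simp [pd, (((hasFDerivAt_apply (𝕜 := ℝ) (F' := fun _ => ℝ) j x).pow 2).const_mul k).fderiv]

lemma pd_sub (i : Fin 3) {f g : (Fin 3 → ℝ) → ℝ} (hf : DifferentiableAt ℝ f x)
    (hg : DifferentiableAt ℝ g x) : pd i (fun y => f y - g y) x = pd i f x - pd i g x := by
  rw [pd, fderiv_fun_sub hf hg]; rfl

lemma strain_uEight (d e : ℝ) (y : Fin 3 → ℝ) :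
    strain (uEight d e) y = !![0, 0, d * y 0; 0, 0, 0; d * y 0, 0, -(2 * e) * y 2] := by
  have hu₃ : ∀ i, pd i (fun z => d * z 0 ^ 2 - e * z 2 ^ 2) y =
      d * (2 * y 0 * (Pi.single i 1 : Fin 3 → ℝ) 0) -
        e * (2 * y 2 * (Pi.single i 1 : Fin 3 → ℝ) 2) := fun i => by
    rw [pd_sub i (by fun_prop) (by fun_prop), pd_const_mul_coord_sq, pd_const_mul_coord_sq]
  ext i j
  fin_cases i <;> fin_cases j <;> simp [strain, uEight, hu₃, pd_const] <;> ring

lemma stress_uEight (a b c d e : ℝ) (y : Fin 3 → ℝ) :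
    TImat a b c d e *ᵥ voigtVec (strain (uEight d e) y) =
      ![-2 * c * e * y 2, -2 * c * e * y 2, -2 * d * e * y 2, 0, 2 * d * e * y 0, 0] := by
  ext k
  fin_cases k <;>
    simp [strain_uEight, TImat, voigtVec, Matrix.mulVec, dotProduct, Fin.sum_univ_six] <;> ring

/-- `u⁽⁸⁾` solves the transversely isotropic elasticity system on ℝ³. -/
theorem stmt_17 (a b c d e : ℝ) :
    ∀ x : Fin 3 → ℝ,
      voigtDiv (fun y => TImat a b c d e *ᵥ voigtVec (strain (uEight d e) y)) x = 0 := by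
  intro x
  simp only [stress_uEight]
  ext j
  simp only [voigtDiv, Matrix.cons_val, pd_const_mul_coord, pd_const]
  fin_cases j <;> simp
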